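/- arXiv:2005.07944 — 2 statements merged into one kernel-verified Lean document; each statement's English description precedes it below -/
import Mathlib

section
/- Fix m ∈ ℕ, n = ⌊m/2⌋, β ≥ 0. Let D_n ⊆ ℝ^{n+1} be the convex cone generated by the vectors v_0, …, v_n where (v_k)_i = C(m−2k, i−k). Then for every j ∈ ℕ, the vector w^{(j)} with entries w^{(j)}_i = (i(m−i))^j · C(m,i) (for 0 ≤ i ≤ n) lies in D_n. -/
/-- The generator vectors `v_k ∈ ℝ^{n+1}` with `(v_k)_i = C(m-2k, i-k)`
(zero when `i < k`). -/
noncomputable def vgen (m : ℕ) (k : ℕ) : Fin (m / 2 + 1) → ℝ :=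
  fun i => if k ≤ (i : ℕ) then ((m - 2 * k).choose ((i : ℕ) - k) : ℝ) else 0

/-- The convex cone `D_n ⊆ ℝ^{n+1}` generated by `v_0, …, v_n`: the set of
nonnegative linear combinations of the generators. -/
def inConeD (m : ℕ) (w : Fin (m / 2 + 1) → ℝ) : Prop :=
  ∃ c : Fin (m / 2 + 1) → ℝ, (∀ k, 0 ≤ c k) ∧ w = ∑ k, c k • vgen m (k : ℕ)

/-! Entrywise multiplication by the weight `i (m - i)` maps the cone `D_n` into itself, since on
the generators it acts by `i (m - i) v_k = (m - 2k)(m - 2k - 1) v_(k+1) + k (m - k) v_k`, a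
combination with natural-number coefficients (and `v_(n+1)` vanishes on the indices `0, …, n`).
As `w⁽⁰⁾ = v_0` and `w⁽ʲ⁾` is `v_0` multiplied `j` times by the weight, induction on `j` finishes. -/

theorem Nat.add_one_mul_sub_mul_choose (N s : ℕ) :
    (s + 1) * (N + 1 - s) * (N + 2).choose (s + 1) = (N + 2) * (N + 1) * N.choose s := by
  calc (s + 1) * (N + 1 - s) * (N + 2).choose (s + 1)
      = (N + 1 + 1).choose (s + 1) * (s + 1) * (N + 1 - s) := by ring
    _ = (N + 2) * ((N + 1).choose s * (N + 1 - s)) := by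
      rw [← Nat.add_one_mul_choose_eq]; ring
    _ = (N + 2) * (N + 1) * N.choose s := by rw [← Nat.choose_mul_succ_eq]; ring

theorem Nat.choose_sub_two_mul_recurrence (m k i : ℕ) (hki : k < i) (him : 2 * i ≤ m) :
    i * (m - i) * (m - 2 * k).choose (i - k) =
      (m - 2 * k) * (m - 2 * k - 1) * (m - 2 * (k + 1)).choose (i - (k + 1)) +
        k * (m - k) * (m - 2 * k).choose (i - k) := by
  obtain ⟨s, rfl⟩ : ∃ s, i = k + 1 + s := ⟨i - k - 1, by omega⟩
  obtain ⟨N, rfl⟩ : ∃ N, m = 2 * k + N + 2 := ⟨m - 2 * k - 2, by omega⟩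
  have hweight : (k + 1 + s) * (2 * k + N + 2 - (k + 1 + s)) =
      (s + 1) * (N + 1 - s) + k * (2 * k + N + 2 - k) := by
    zify [show s ≤ N + 1 by omega, show k + 1 + s ≤ 2 * k + N + 2 by omega,
      show k ≤ 2 * k + N + 2 by omega]
    ring
  rw [hweight, add_mul, show 2 * k + N + 2 - 2 * k = N + 2 by omega,
    show N + 2 - 1 = N + 1 by omega, show 2 * k + N + 2 - 2 * (k + 1) = N by omega,
    show k + 1 + s - k = s + 1 by omega, show k + 1 + s - (k + 1) = s by omega,
    Nat.add_one_mul_sub_mul_choose]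

noncomputable def coneD (m : ℕ) : PointedCone ℝ (Fin (m / 2 + 1) → ℝ) :=
  PointedCone.hull ℝ (Set.range fun k : Fin (m / 2 + 1) => vgen m k)

theorem inConeD_of_mem_coneD {m : ℕ} {w : Fin (m / 2 + 1) → ℝ} (hw : w ∈ coneD m) :
    inConeD m w := by
  obtain ⟨c, rfl⟩ := (Submodule.mem_span_range_iff_exists_fun _).mp hw
  exact ⟨fun k => c k, fun k => (c k).2, rfl⟩

theorem vgen_mem_coneD (m k : ℕ) : vgen m k ∈ coneD m := by
  by_cases hk : k ≤ m / 2
  · exact PointedCone.subset_hull ⟨⟨k, Nat.lt_succ_of_le hk⟩, rfl⟩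
  · convert (coneD m).zero_mem
    ext i
    exact if_neg (by omega)

noncomputable def coneWeight (m : ℕ) : Fin (m / 2 + 1) → ℝ :=
  fun i => (i : ℕ) * ((m : ℝ) - (i : ℕ))

theorem coneWeight_apply (m : ℕ) (i : Fin (m / 2 + 1)) :
    coneWeight m i = ((i * (m - i) : ℕ) : ℝ) := by
  rw [coneWeight, Nat.cast_mul, Nat.cast_sub (by omega)]

theorem coneWeight_mul_vgen (m k : ℕ) :
    coneWeight m * vgen m k =
      ((m - 2 * k) * (m - 2 * k - 1)) • vgen m (k + 1) + (k * (m - k)) • vgen m k := by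
  ext i
  simp only [Pi.mul_apply, Pi.add_apply, Pi.natCast_apply, nsmul_eq_mul, coneWeight_apply, vgen]
  rcases lt_trichotomy (i : ℕ) k with hik | rfl | hki
  · simp [show ¬ k ≤ i by omega, show ¬ k + 1 ≤ i by omega]
  · simp
  · simp only [show k ≤ i by omega, show k + 1 ≤ i by omega, if_true]
    exact_mod_cast Nat.choose_sub_two_mul_recurrence m k i hki (by omega)

theorem coneWeight_mul_mem_coneD {m : ℕ} {w : Fin (m / 2 + 1) → ℝ} (hw : w ∈ coneD m) :
    coneWeight m * w ∈ coneD m := by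
  induction hw using Submodule.span_induction with
  | mem v hv =>
    obtain ⟨k, rfl⟩ := hv
    rw [coneWeight_mul_vgen]
    exact add_mem (nsmul_mem (vgen_mem_coneD m _) _) (nsmul_mem (vgen_mem_coneD m _) _)
  | zero => simp
  | add v w _ _ hv hw => simpa only [mul_add] using add_mem hv hw
  | smul c v _ hv => simpa only [mul_smul_comm] using Submodule.smul_mem (coneD m) c hv

theorem coneWeight_pow_mul_mem_coneD {m : ℕ} {w : Fin (m / 2 + 1) → ℝ} (j : ℕ)
    (hw : w ∈ coneD m) : coneWeight m ^ j * w ∈ coneD m := by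
  induction j with
  | zero => simpa only [pow_zero, one_mul] using hw
  | succ j ih => simpa only [pow_succ', mul_assoc] using coneWeight_mul_mem_coneD ih

theorem stmt_10_general (m : ℕ) (j : ℕ) :
    inConeD m (fun i => ((i : ℕ) * ((m : ℝ) - (i : ℕ))) ^ j * (m.choose (i : ℕ) : ℝ)) := by
  convert inConeD_of_mem_coneD (coneWeight_pow_mul_mem_coneD j (vgen_mem_coneD m 0)) using 1
  ext i
  simp [coneWeight, vgen]

/-- for every `j ∈ ℕ`, the vector with entries `(i(m-i))^j · C(m,i)`
(`0 ≤ i ≤ n = ⌊m/2⌋`) lies in the cone `D_n`. -/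
theorem stmt_10 (m : ℕ) (β : ℝ) (hβ : 0 ≤ β) (j : ℕ) :
    inConeD m (fun i => ((i : ℕ) * ((m : ℝ) - (i : ℕ))) ^ j * (m.choose (i : ℕ) : ℝ)) :=
  stmt_10_general m j
end

section
/- Fix m ∈ ℕ, n = ⌊m/2⌋, and β ≥ 0. Let z ∈ ℝ^{n+1} have entries z_i = C(m,i)·exp(β·i·(m−i)). Then z lies in the closed convex cone generated by the vectors v_0, …, v_n, where (v_k)_i = C(m−2k, i−k). -/
theorem Nat.add_one_mul_add_one_mul_choose (t a : ℕ) :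
    (t + 1) * (a + 1) * (t + a + 2).choose (t + 1) =
      (t + a + 2) * (t + a + 1) * (t + a).choose t := by
  have h := choose_mul_succ_eq (t + a) t
  rw [show t + a + 1 - t = a + 1 by omega] at h
  rw [mul_assoc (t + a + 2), mul_comm (t + a + 1), h, ← mul_assoc, add_one_mul_choose_eq]
  ring

namespace PointedCone

variable {R E ι : Type*} [Semiring R] [PartialOrder R] [IsOrderedRing R] [AddCommMonoid E]
  [Module R E]

theorem mem_hull_range_iff_exists_nonneg [Fintype ι] {v : ι → E} {x : E} :
    x ∈ hull R (Set.range v) ↔ ∃ c : ι → R, (∀ i, 0 ≤ c i) ∧ x = ∑ i, c i • v i := by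
  rw [hull, Submodule.mem_span_range_iff_exists_fun]
  constructor
  · rintro ⟨c, rfl⟩
    exact ⟨fun i => c i, fun i => (c i).2, rfl⟩
  · rintro ⟨c, hc, rfl⟩
    exact ⟨fun i => ⟨c i, hc i⟩, rfl⟩

theorem mul_mem_hull_of_forall_mem {A : Type*} [Semiring A] [Algebra ℝ A] {S : Set A} {x : A}
    (hS : ∀ s ∈ S, x * s ∈ hull ℝ S) {y : A} (hy : y ∈ hull ℝ S) : x * y ∈ hull ℝ S :=
  (Submodule.span_le (p := (hull ℝ S).comap (LinearMap.mulLeft ℝ x)) |>.mpr hS) hy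

theorem exp_mul_mem_closure {A : Type*} [NormedRing A] [NormedAlgebra ℝ A] [CompleteSpace A]
    {C : PointedCone ℝ A} {x : A} (hx : ∀ y ∈ C, x * y ∈ C) {w : A} (hw : w ∈ C) :
    NormedSpace.exp x * w ∈ closure (C : Set A) := by
  have hpow (n : ℕ) : x ^ n * w ∈ C := by
    induction n with
    | zero => simpa using hw
    | succ n ih => simpa [pow_succ', mul_assoc] using hx _ ih
  have hsum := (NormedSpace.exp_series_hasSum_exp' (𝕂 := ℝ) x).mul_right w
  refine mem_closure_of_tendsto hsum.tendsto_sum_nat (.of_forall fun N => sum_mem fun n _ => ?_)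
  rw [smul_mul_assoc]
  exact C.smul_mem (by positivity) (hpow n)

end PointedCone

theorem vgen_eq_zero_of_lt {m k : ℕ} (hk : m / 2 < k) : vgen m k = 0 := by
  funext i
  exact if_neg (by omega)

theorem vgen_zero (m : ℕ) : vgen m 0 = fun i : Fin (m / 2 + 1) => (m.choose i : ℝ) := by
  funext i
  simp [vgen]

/-- With `a = m - 2k` and `t = i - k`: `i (m - i) = t (a - t) + k (m - k)` and
`t (a - t) C(a, t) = a (a - 1) C(a - 2, t - 1)`. -/
theorem mul_vgen (m k : ℕ) :
    (fun i : Fin (m / 2 + 1) => (i : ℝ) * ((m : ℝ) - i)) * vgen m k =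
      ((m - 2 * k) * (m - 2 * k - 1)) • vgen m (k + 1) + (k * (m - k)) • vgen m k := by
  funext i
  have hi : (i : ℕ) ≤ m / 2 := Nat.lt_succ_iff.mp i.isLt
  simp only [Pi.mul_apply, Pi.add_apply, Pi.smul_apply]
  simp only [nsmul_eq_mul, vgen]
  rcases lt_trichotomy (i : ℕ) k with hik | hik | hki
  · rw [if_neg (show ¬k ≤ i by omega), if_neg (show ¬k + 1 ≤ i by omega)]
    ring
  · rw [if_pos hik.ge, if_neg (show ¬k + 1 ≤ i by omega), hik]
    push_cast [Nat.sub_self, Nat.choose_zero_right, Nat.cast_sub (by omega : k ≤ m)]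
    ring
  · obtain ⟨t, a, hi_eq, hm_eq⟩ : ∃ t a, (i : ℕ) = k + 1 + t ∧ m = 2 * k + 2 + t + a :=
      ⟨i - (k + 1), m - 2 * k - 2 - (i - (k + 1)), by omega, by omega⟩
    rw [if_pos (show k ≤ i by omega), if_pos (show k + 1 ≤ i from hki),
      show m - 2 * k = t + a + 2 by omega,
      show m - 2 * (k + 1) = t + a by omega, show (i : ℕ) - k = t + 1 by omega,
      show (i : ℕ) - (k + 1) = t by omega, show t + a + 2 - 1 = t + a + 1 by omega,
      show m - k = k + 2 + t + a by omega, hi_eq, hm_eq]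
    have h := congrArg (Nat.cast : ℕ → ℝ) (Nat.add_one_mul_add_one_mul_choose t a)
    push_cast at h ⊢
    linear_combination h

def vgenCone (m : ℕ) : PointedCone ℝ (Fin (m / 2 + 1) → ℝ) :=
  PointedCone.hull ℝ (Set.range fun k : Fin (m / 2 + 1) => vgen m k)

theorem vgen_mem_vgenCone (m k : ℕ) : vgen m k ∈ vgenCone m := by
  rcases le_or_gt k (m / 2) with hk | hk
  · exact PointedCone.subset_hull ⟨⟨k, by omega⟩, rfl⟩
  · rw [vgen_eq_zero_of_lt hk]
    exact zero_mem _

theorem mul_mem_vgenCone (m : ℕ) {y : Fin (m / 2 + 1) → ℝ} (hy : y ∈ vgenCone m) :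
    (fun i : Fin (m / 2 + 1) => (i : ℝ) * ((m : ℝ) - i)) * y ∈ vgenCone m := by
  refine PointedCone.mul_mem_hull_of_forall_mem ?_ hy
  rintro _ ⟨k, rfl⟩
  rw [mul_vgen]
  exact add_mem (nsmul_mem (vgen_mem_vgenCone m _) _) (nsmul_mem (vgen_mem_vgenCone m k) _)

/-- Lemma 2 of the paper: for `β ≥ 0`, the vector `z` with entries
`z_i = C(m,i) · exp (β i (m - i))` lies in the closed convex cone generated by the
vectors `v_0, …, v_n`, i.e. in the topological closure of the set of nonnegative
linear combinations of the `v_k`. -/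
theorem stmt_11 (m : ℕ) (β : ℝ) (hβ : 0 ≤ β) :
    (fun i : Fin (m / 2 + 1) =>
        (m.choose (i : ℕ) : ℝ) * Real.exp (β * (i : ℕ) * ((m : ℝ) - (i : ℕ)))) ∈
      closure {w : Fin (m / 2 + 1) → ℝ |
        ∃ c : Fin (m / 2 + 1) → ℝ, (∀ k, 0 ≤ c k) ∧ w = ∑ k, c k • vgen m (k : ℕ)} := by
  set x := fun i : Fin (m / 2 + 1) => (i : ℝ) * ((m : ℝ) - i)
  have hz : NormedSpace.exp (β • x) * vgen m 0 = fun i : Fin (m / 2 + 1) =>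
      (m.choose (i : ℕ) : ℝ) * Real.exp (β * (i : ℕ) * ((m : ℝ) - (i : ℕ))) := by
    funext i
    simp only [Pi.mul_apply, Pi.coe_exp, ← Real.exp_eq_exp_ℝ, vgen_zero, Pi.smul_apply, x]
    ring_nf
  have hmem : NormedSpace.exp (β • x) * vgen m 0 ∈ closure (vgenCone m : Set _) :=
    PointedCone.exp_mul_mem_closure
      (fun y hy => smul_mul_assoc β x y ▸ (vgenCone m).smul_mem hβ (mul_mem_vgenCone m hy))
      (vgen_mem_vgenCone m 0)
  rw [hz] at hmem
  exact closure_mono (fun w hw => PointedCone.mem_hull_range_iff_exists_nonneg.mp hw) hmem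
end
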